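/- Every minimal B-sequence F⁰_{α₀} … Fⁿ_{αₙ} of φ-atoms satisfies n ≤ 5|φ|, i.e., a minimal B-sequence has length at most 5|φ| + 1, where |φ| = |clos(φ)|/2. -/

import Mathlib

noncomputable section

/-- Syntax of `ABD` interval temporal logic formulas over proposition letters of type `P`. -/
inductive Fml (P : Type) : Type where
  | bot  : Fml P
  | atom : P → Fml P
  | neg  : Fml P → Fml P
  | or   : Fml P → Fml P → Fml P
  | diaA : Fml P → Fml P
  | diaB : Fml P → Fml P
  | diaD : Fml P → Fml P
deriving DecidableEq

namespace Fml

variable {P : Type}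

def and (ψ χ : Fml P) : Fml P := neg (or (neg ψ) (neg χ))
def imp (ψ χ : Fml P) : Fml P := or (neg ψ) χ
def iff' (ψ χ : Fml P) : Fml P := Fml.and (imp ψ χ) (imp χ ψ)
def top : Fml P := neg bot
def boxA (ψ : Fml P) : Fml P := neg (diaA (neg ψ))
def boxB (ψ : Fml P) : Fml P := neg (diaB (neg ψ))
def boxD (ψ : Fml P) : Fml P := neg (diaD (neg ψ))
/-- `π = [B]⊥`, true exactly at point-intervals. -/
def pi : Fml P := boxB bot
/-- the global operator `[G]ψ = ψ ∧ [A]ψ ∧ [B]ψ ∧ [B][A]ψ`. -/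
def glob (ψ : Fml P) : Fml P := Fml.and ψ (Fml.and (boxA ψ) (Fml.and (boxB ψ) (boxB (boxA ψ))))
def bigAnd (l : List (Fml P)) : Fml P := l.foldr Fml.and top
def bigOr (l : List (Fml P)) : Fml P := l.foldr Fml.or bot

end Fml

attribute [local instance] Classical.propDecidable

/-- The set of subformulas of a formula. -/
def subf : Fml ℕ → Finset (Fml ℕ)
  | Fml.bot => {Fml.bot}
  | Fml.atom p => {Fml.atom p}
  | Fml.neg ψ => insert (Fml.neg ψ) (subf ψ)
  | Fml.or ψ χ => insert (Fml.or ψ χ) (subf ψ ∪ subf χ)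
  | Fml.diaA ψ => insert (Fml.diaA ψ) (subf ψ)
  | Fml.diaB ψ => insert (Fml.diaB ψ) (subf ψ)
  | Fml.diaD ψ => insert (Fml.diaD ψ) (subf ψ)

/-- Negation normalizing double negations (`¬` of `¬ψ` is `ψ`). -/
def negf : Fml ℕ → Fml ℕ
  | Fml.neg ψ => ψ
  | ψ => Fml.neg ψ

/-- The closure `clos(φ)`: all subformulas of `φ` and their negations, plus `π` and `¬π`. -/
def clos (φ : Fml ℕ) : Finset (Fml ℕ) :=
  subf φ ∪ (subf φ).image Fml.neg ∪ {Fml.pi, Fml.neg Fml.pi}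

/-- `TF^φ_A = {ψ : ⟨A⟩ψ ∈ clos(φ)}`. -/
def argA (φ : Fml ℕ) : Finset (Fml ℕ) :=
  (clos φ).biUnion fun ψ => match ψ with | Fml.diaA χ => {χ} | _ => ∅

/-- `{ψ : ⟨B⟩ψ ∈ clos(φ)}`. -/
def argB (φ : Fml ℕ) : Finset (Fml ℕ) :=
  (clos φ).biUnion fun ψ => match ψ with | Fml.diaB χ => {χ} | _ => ∅

/-- `{ψ : ⟨D⟩ψ ∈ clos(φ)}`. -/
def argD (φ : Fml ℕ) : Finset (Fml ℕ) :=
  (clos φ).biUnion fun ψ => match ψ with | Fml.diaD χ => {χ} | _ => ∅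

/-- `{ψ : [B]ψ ∈ clos(φ)}` (recall `[B]ψ = ¬⟨B⟩¬ψ`). -/
def boxArgB (φ : Fml ℕ) : Finset (Fml ℕ) :=
  (clos φ).biUnion fun ψ =>
    match ψ with | Fml.neg (Fml.diaB (Fml.neg χ)) => {χ} | _ => ∅

/-- `{ψ : [D]ψ ∈ clos(φ)}` (recall `[D]ψ = ¬⟨D⟩¬ψ`). -/
def boxArgD (φ : Fml ℕ) : Finset (Fml ℕ) :=
  (clos φ).biUnion fun ψ =>
    match ψ with | Fml.neg (Fml.diaD (Fml.neg χ)) => {χ} | _ => ∅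

/-- The proposition letters occurring in `clos(φ)`. -/
def propsOf (φ : Fml ℕ) : Finset ℕ :=
  (clos φ).biUnion fun ψ => match ψ with | Fml.atom p => {p} | _ => ∅

/-- `|φ| = |clos(φ)| / 2`. -/
def fsize (φ : Fml ℕ) : ℕ := (clos φ).card / 2

/-- The three possible values `◇, ◆, □` of the function `α` of an atom. -/
inductive AFlag : Type where
  | dia  : AFlag  -- `◇`
  | bdia : AFlag  -- `◆`
  | box  : AFlag  -- `□`
deriving DecidableEq

/-- A `φ`-atom `F_α = (F, α)`: a maximal consistent subset `F` of `clos(φ)` together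
with a function `α : TF^φ_A → {◇,◆,□}` (extended by the value `□` outside `TF^φ_A`,
so that equality of the `α` components is equality of functions). -/
structure Atom (φ : Fml ℕ) where
  F : Finset (Fml ℕ)
  A : Fml ℕ → AFlag
  sub : F ⊆ clos φ
  negCond : ∀ ψ ∈ clos φ, (ψ ∈ F ↔ negf ψ ∉ F)
  orCond : ∀ ψ χ : Fml ℕ, Fml.or ψ χ ∈ clos φ → (Fml.or ψ χ ∈ F ↔ (ψ ∈ F ∨ χ ∈ F))
  piCond : Fml.pi ∈ F → ∀ ψ : Fml ℕ, Fml.boxA ψ ∈ F → ψ ∈ F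
  aBox : ∀ ψ ∈ argA φ, A ψ = AFlag.box → negf ψ ∈ F
  aMem : ∀ ψ ∈ argA φ, ψ ∈ F → A ψ = AFlag.bdia
  aDia : ∀ ψ ∈ argA φ, Fml.pi ∈ F → A ψ = AFlag.dia → (Fml.diaA ψ ∈ F ∧ ψ ∉ F)
  aBdia : ∀ ψ ∈ argA φ, Fml.pi ∈ F → A ψ = AFlag.bdia → ψ ∈ F
  aOut : ∀ ψ : Fml ℕ, ψ ∉ argA φ → A ψ = AFlag.box

variable {φ : Fml ℕ}

/-- `Req_A(F_α) = {ψ ∈ clos(φ) : ⟨A⟩ψ ∈ F}`. -/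
def ReqA (a : Atom φ) : Finset (Fml ℕ) := (argA φ).filter fun ψ => Fml.diaA ψ ∈ a.F
/-- `Req_B(F_α) = {ψ ∈ clos(φ) : ⟨B⟩ψ ∈ F}`. -/
def ReqB (a : Atom φ) : Finset (Fml ℕ) := (argB φ).filter fun ψ => Fml.diaB ψ ∈ a.F
/-- `Req_D(F_α) = {ψ ∈ clos(φ) : ⟨D⟩ψ ∈ F}`. -/
def ReqD (a : Atom φ) : Finset (Fml ℕ) := (argD φ).filter fun ψ => Fml.diaD ψ ∈ a.F
/-- `Obs_B(F_α) = {ψ ∈ F : ⟨B⟩ψ ∈ clos(φ)}`. -/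
def ObsB (a : Atom φ) : Finset (Fml ℕ) := (argB φ).filter fun ψ => ψ ∈ a.F
/-- `Obs_D(F_α) = {ψ ∈ F : ⟨D⟩ψ ∈ clos(φ)}`. -/
def ObsD (a : Atom φ) : Finset (Fml ℕ) := (argD φ).filter fun ψ => ψ ∈ a.F
/-- `Box_B(F_α) = {ψ : [B]ψ ∈ F}`. -/
def BoxB (a : Atom φ) : Finset (Fml ℕ) := (boxArgB φ).filter fun ψ => Fml.boxB ψ ∈ a.F
/-- `Box_D(F_α) = {ψ : [D]ψ ∈ F}`. -/
def BoxD (a : Atom φ) : Finset (Fml ℕ) := (boxArgD φ).filter fun ψ => Fml.boxD ψ ∈ a.F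

/-- The relation `F_α →_B G_β`. -/
def stepB (a b : Atom φ) : Prop :=
  ReqB a = ReqB b ∪ ObsB b ∧
  ∀ ψ ∈ argA φ, (b.A ψ = AFlag.bdia ∨ b.A ψ = AFlag.box ∨ ψ ∉ a.F) → a.A ψ = b.A ψ

/-- The relation `F_α →_D G_β`. -/
def stepD (a b : Atom φ) : Prop := ReqD b ∪ ObsD b ⊆ ReqD a

/-- An atom is initial iff `π ∈ F`. -/
def Initial (a : Atom φ) : Prop := Fml.pi ∈ a.F

/-- An atom is final iff `α(ψ) ∈ {◆,□}` for all `ψ ∈ TF^φ_A`. -/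
def Final (a : Atom φ) : Prop := ∀ ψ ∈ argA φ, a.A ψ ≠ AFlag.dia

/-- The function `Δ↑`. -/
def delta (a : Atom φ) : ℤ :=
  (2 * ((argB φ).card : ℤ) - 2 * ((ReqB a).card : ℤ) - (((ObsB a) \ (ReqB a)).card : ℤ))
  + (((argD φ).card : ℤ) - ((ReqD a).card : ℤ))
  + (((propsOf φ).card : ℤ)
      - (((propsOf φ).filter fun p => Fml.neg (Fml.atom p) ∈ a.F).card : ℤ))
  + (((argA φ).filter fun ψ => a.A ψ = AFlag.dia).card : ℤ)

/-- A `φ`-compass structure `G = (N, L)`: a labelling of the points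
`{(x,y) : 0 ≤ x ≤ y ≤ N}` by `φ`-atoms satisfying initial formula, `A`-consistency,
`B`-consistency, `D`-consistency, `D`-fulfilment and `A`-fulfilment. -/
structure Compass (φ : Fml ℕ) where
  N : ℕ
  L : ℕ → ℕ → Atom φ
  initF : φ ∈ (L 0 N).F
  consA : ∀ x y : ℕ, x ≤ y → y ≤ N → ReqA (L x y) = ReqA (L y y)
  consB : ∀ x y : ℕ, x ≤ y → y < N → stepB (L x (y + 1)) (L x y)
  pointB : ∀ x : ℕ, x ≤ N → ReqB (L x x) = ∅
  consD : ∀ x x' y' y : ℕ, x < x' → x' ≤ y' → y' < y → y ≤ N → stepD (L x y) (L x' y')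
  fulD : ∀ x y : ℕ, x ≤ y → y ≤ N → ∀ ψ ∈ ReqD (L x y),
    ∃ x' y' : ℕ, x < x' ∧ x' ≤ y' ∧ y' < y ∧ ψ ∈ (L x' y').F
  fulA : ∀ x : ℕ, x ≤ N → Final (L x N)

/-- A compass structure is homogeneous if the proposition letters of `L(x,y)` are
exactly those holding at all point atoms `L(z,z)` for `x ≤ z ≤ y`. -/
def HomogC {φ : Fml ℕ} (G : Compass φ) : Prop :=
  ∀ x y : ℕ, x ≤ y → y ≤ G.N → ∀ p : ℕ,
    (Fml.atom p ∈ (G.L x y).F ↔ ∀ z, x ≤ z → z ≤ y → Fml.atom p ∈ (G.L z z).F)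

/-- `y` is one of the rows recorded in the shading of column `x`: it lies in `[x, N]`
and it is the minimum row of column `x` exhibiting its value of `Δ↑`. -/
def isShRow {φ : Fml ℕ} (G : Compass φ) (x y : ℕ) : Prop :=
  x ≤ y ∧ y ≤ G.N ∧ ∀ z, z < y → x ≤ z → delta (G.L x z) ≠ delta (G.L x y)

/-- `Sh^G_ℕ(x)`: the (increasing) list of rows of the shading of column `x`. -/
def shRows {φ : Fml ℕ} (G : Compass φ) (x : ℕ) : List ℕ :=
  (List.range (G.N + 1)).filter fun y => decide (isShRow G x y)

/-- `Sh^G_B(x)`: the atom projection of the shading of column `x`. -/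
def shB {φ : Fml ℕ} (G : Compass φ) (x : ℕ) : List (Atom φ) :=
  (shRows G x).map fun y => G.L x y

/-- A `B`-sequence of atoms `F⁰ … Fⁿ`. -/
def IsBSeq {φ : Fml ℕ} (l : List (Atom φ)) : Prop :=
  ∃ h : l ≠ [],
    Initial (l.head h) ∧ Final (l.getLast h) ∧
    ∀ i : ℕ, ∀ hi : i + 1 < l.length,
      stepB (l.get ⟨i + 1, hi⟩) (l.get ⟨i, Nat.lt_of_succ_lt hi⟩) ∧
      ReqD (l.get ⟨i, Nat.lt_of_succ_lt hi⟩) ⊆ ReqD (l.get ⟨i + 1, hi⟩) ∧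
      ∀ p : ℕ, Fml.atom p ∈ (l.get ⟨i + 1, hi⟩).F →
        Fml.atom p ∈ (l.get ⟨i, Nat.lt_of_succ_lt hi⟩).F

/-- A minimal `B`-sequence: a `B`-sequence along which `Δ↑` strictly decreases. -/
def IsMinBSeq {φ : Fml ℕ} (l : List (Atom φ)) : Prop :=
  IsBSeq l ∧ ∀ i : ℕ, ∀ hi : i + 1 < l.length,
    delta (l.get ⟨i + 1, hi⟩) < delta (l.get ⟨i, Nat.lt_of_succ_lt hi⟩)

/-- size of a formula -/
private def szF : Fml ℕ → ℕ
  | Fml.bot => 1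
  | Fml.atom _ => 1
  | Fml.neg ψ => szF ψ + 1
  | Fml.or ψ χ => szF ψ + szF χ + 1
  | Fml.diaA ψ => szF ψ + 1
  | Fml.diaB ψ => szF ψ + 1
  | Fml.diaD ψ => szF ψ + 1

private lemma szF_subf {ψ χ : Fml ℕ} (h : ψ ∈ subf χ) : szF ψ ≤ szF χ := by
  induction χ with
  | bot => simp [subf] at h; subst h; rfl
  | atom p => simp [subf] at h; subst h; rfl
  | neg τ ih =>
    simp [subf] at h
    rcases h with h | h
    · subst h; rfl
    · have := ih h; simp [szF]; omega
  | or τ₁ τ₂ ih₁ ih₂ =>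
    simp [subf] at h
    rcases h with h | h | h
    · subst h; rfl
    · have := ih₁ h; simp [szF]; omega
    · have := ih₂ h; simp [szF]; omega
  | diaA τ ih =>
    simp [subf] at h
    rcases h with h | h
    · subst h; rfl
    · have := ih h; simp [szF]; omega
  | diaB τ ih =>
    simp [subf] at h
    rcases h with h | h
    · subst h; rfl
    · have := ih h; simp [szF]; omega
  | diaD τ ih =>
    simp [subf] at h
    rcases h with h | h
    · subst h; rfl
    · have := ih h; simp [szF]; omega

private lemma self_mem_subf (χ : Fml ℕ) : χ ∈ subf χ := by
  cases χ <;> simp [subf]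

private lemma neg_not_mem_subf (χ : Fml ℕ) : Fml.neg χ ∉ subf χ := by
  intro h
  have := szF_subf h
  simp [szF] at this

private lemma card_subf_lt_card_clos (χ : Fml ℕ) :
    (subf χ).card + 1 ≤ (clos χ).card := by
  have hsub : insert (Fml.neg χ) (subf χ) ⊆ clos χ := by
    intro ψ hψ
    rcases Finset.mem_insert.1 hψ with h | h
    · subst h
      simp only [clos, Finset.mem_union]
      exact Or.inl (Or.inr (Finset.mem_image_of_mem _ (self_mem_subf χ)))
    · simp only [clos, Finset.mem_union]
      exact Or.inl (Or.inl h)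
  calc (subf χ).card + 1 = (insert (Fml.neg χ) (subf χ)).card := by
        rw [Finset.card_insert_of_notMem (neg_not_mem_subf χ)]
    _ ≤ (clos χ).card := Finset.card_le_card hsub

private lemma diaA_subf_of_clos {χ ψ : Fml ℕ} (h : Fml.diaA ψ ∈ clos χ) :
    Fml.diaA ψ ∈ subf χ := by
  simp only [clos, Finset.mem_union, Finset.mem_image, Finset.mem_insert,
    Finset.mem_singleton, Fml.pi, Fml.boxB] at h
  rcases h with (h | ⟨τ, _, hτ⟩) | h | h
  · exact h
  · exact absurd hτ (by simp)
  · exact absurd h (by simp)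
  · exact absurd h (by simp)

private lemma diaB_subf_of_clos {χ ψ : Fml ℕ} (h : Fml.diaB ψ ∈ clos χ) :
    Fml.diaB ψ ∈ subf χ := by
  simp only [clos, Finset.mem_union, Finset.mem_image, Finset.mem_insert,
    Finset.mem_singleton, Fml.pi, Fml.boxB] at h
  rcases h with (h | ⟨τ, _, hτ⟩) | h | h
  · exact h
  · exact absurd hτ (by simp)
  · exact absurd h (by simp)
  · exact absurd h (by simp)

private lemma diaD_subf_of_clos {χ ψ : Fml ℕ} (h : Fml.diaD ψ ∈ clos χ) :
    Fml.diaD ψ ∈ subf χ := by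
  simp only [clos, Finset.mem_union, Finset.mem_image, Finset.mem_insert,
    Finset.mem_singleton, Fml.pi, Fml.boxB] at h
  rcases h with (h | ⟨τ, _, hτ⟩) | h | h
  · exact h
  · exact absurd hτ (by simp)
  · exact absurd h (by simp)
  · exact absurd h (by simp)

private lemma atom_subf_of_clos {χ : Fml ℕ} {p : ℕ} (h : Fml.atom p ∈ clos χ) :
    Fml.atom p ∈ subf χ := by
  simp only [clos, Finset.mem_union, Finset.mem_image, Finset.mem_insert,
    Finset.mem_singleton, Fml.pi, Fml.boxB] at h
  rcases h with (h | ⟨τ, _, hτ⟩) | h | h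
  · exact h
  · exact absurd hτ (by simp)
  · exact absurd h (by simp)
  · exact absurd h (by simp)

private lemma argA_image {χ ψ : Fml ℕ} (h : ψ ∈ argA χ) : Fml.diaA ψ ∈ subf χ := by
  simp only [argA, Finset.mem_biUnion] at h
  obtain ⟨τ, hτ, hm⟩ := h
  cases τ <;> simp_all
  subst hm
  exact diaA_subf_of_clos hτ

private lemma argB_image {χ ψ : Fml ℕ} (h : ψ ∈ argB χ) : Fml.diaB ψ ∈ subf χ := by
  simp only [argB, Finset.mem_biUnion] at h
  obtain ⟨τ, hτ, hm⟩ := h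
  cases τ <;> simp_all
  subst hm
  exact diaB_subf_of_clos hτ

private lemma argD_image {χ ψ : Fml ℕ} (h : ψ ∈ argD χ) : Fml.diaD ψ ∈ subf χ := by
  simp only [argD, Finset.mem_biUnion] at h
  obtain ⟨τ, hτ, hm⟩ := h
  cases τ <;> simp_all
  subst hm
  exact diaD_subf_of_clos hτ

private lemma propsOf_image {χ : Fml ℕ} {p : ℕ} (h : p ∈ propsOf χ) :
    Fml.atom p ∈ subf χ := by
  simp only [propsOf, Finset.mem_biUnion] at h
  obtain ⟨τ, hτ, hm⟩ := h
  cases τ <;> simp_all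
  subst hm
  exact atom_subf_of_clos hτ

set_option maxHeartbeats 1000000 in
/-- The key counting bound. -/
private lemma sum_cards_le (χ : Fml ℕ) :
    (argA χ).card + (argB χ).card + (argD χ).card + (propsOf χ).card
      ≤ (subf χ).card := by
  classical
  set SA := (argA χ).image Fml.diaA with hSA
  set SB := (argB χ).image Fml.diaB with hSB
  set SD := (argD χ).image Fml.diaD with hSD
  set SP := (propsOf χ).image Fml.atom with hSP
  have hinjA : (argA χ).card = SA.card :=
    (Finset.card_image_of_injective _ (fun a b hab => by injection hab)).symm
  have hinjB : (argB χ).card = SB.card :=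
    (Finset.card_image_of_injective _ (fun a b hab => by injection hab)).symm
  have hinjD : (argD χ).card = SD.card :=
    (Finset.card_image_of_injective _ (fun a b hab => by injection hab)).symm
  have hinjP : (propsOf χ).card = SP.card :=
    (Finset.card_image_of_injective _ (fun a b hab => by injection hab)).symm
  have hsub : SA ∪ SB ∪ SD ∪ SP ⊆ subf χ := by
    intro ψ hψ
    simp only [Finset.mem_union] at hψ
    rcases hψ with ((h | h) | h) | h <;>
      · simp only [hSA, hSB, hSD, hSP, Finset.mem_image] at h
        obtain ⟨τ, hτ, rfl⟩ := h
        first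
          | with_reducible exact argA_image hτ
          | with_reducible exact argB_image hτ
          | with_reducible exact argD_image hτ
          | with_reducible exact propsOf_image hτ
  have dAB : Disjoint SA SB := by
    rw [Finset.disjoint_left]
    rintro x hx hy
    simp only [hSA, hSB, Finset.mem_image] at hx hy
    obtain ⟨a, _, rfl⟩ := hx
    obtain ⟨b, _, hb⟩ := hy
    exact absurd hb (by simp)
  have dABD : Disjoint (SA ∪ SB) SD := by
    rw [Finset.disjoint_left]
    rintro x hx hy
    simp only [hSA, hSB, hSD, Finset.mem_union, Finset.mem_image] at hx hy
    obtain ⟨b, _, hb⟩ := hy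
    rcases hx with ⟨a, _, rfl⟩ | ⟨a, _, rfl⟩ <;> exact absurd hb (by simp)
  have dABDP : Disjoint (SA ∪ SB ∪ SD) SP := by
    rw [Finset.disjoint_left]
    rintro x hx hy
    simp only [hSA, hSB, hSD, hSP, Finset.mem_union, Finset.mem_image] at hx hy
    obtain ⟨b, _, hb⟩ := hy
    rcases hx with (⟨a, _, rfl⟩ | ⟨a, _, rfl⟩) | ⟨a, _, rfl⟩ <;> exact absurd hb (by simp)
  have hcard : (SA ∪ SB ∪ SD ∪ SP).card = SA.card + SB.card + SD.card + SP.card := by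
    rw [Finset.card_union_of_disjoint dABDP, Finset.card_union_of_disjoint dABD,
      Finset.card_union_of_disjoint dAB]
  rw [hinjA, hinjB, hinjD, hinjP, ← hcard]
  exact Finset.card_le_card hsub

private lemma delta_nonneg {χ : Fml ℕ} (a : Atom χ) : 0 ≤ delta a := by
  have hR : ReqB a ⊆ argB χ := Finset.filter_subset _ _
  have hO : ObsB a ⊆ argB χ := Finset.filter_subset _ _
  have hRD : ReqD a ⊆ argD χ := Finset.filter_subset _ _
  have h1 : (ObsB a \ ReqB a).card + (ReqB a).card ≤ (argB χ).card := by
    rw [← Finset.card_union_of_disjoint (Finset.sdiff_disjoint)]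
    exact Finset.card_le_card (Finset.union_subset
      ((Finset.sdiff_subset).trans hO) hR)
  have h2 : (ReqB a).card ≤ (argB χ).card := Finset.card_le_card hR
  have h3 : (ReqD a).card ≤ (argD χ).card := Finset.card_le_card hRD
  have h4 : ((propsOf χ).filter fun p => Fml.neg (Fml.atom p) ∈ a.F).card
      ≤ (propsOf χ).card := Finset.card_filter_le _ _
  unfold delta
  have h5 : (0:ℤ) ≤ (((argA χ).filter fun ψ => a.A ψ = AFlag.dia).card : ℤ) := by positivity
  omega

private lemma delta_le {χ : Fml ℕ} (a : Atom χ) : delta a ≤ 5 * (fsize χ : ℤ) := by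
  have hsum := sum_cards_le χ
  have hc := card_subf_lt_card_clos χ
  have hA : ((argA χ).filter fun ψ => a.A ψ = AFlag.dia).card ≤ (argA χ).card :=
    Finset.card_filter_le _ _
  unfold delta fsize
  have hdiv : 2 * (subf χ).card ≤ 5 * ((clos χ).card / 2) := by omega
  omega

private lemma delta_chain {χ : Fml ℕ} {l : List (Atom χ)} (h : IsMinBSeq l) :
    ∀ i : ℕ, ∀ hi : i < l.length, ∀ h0 : 0 < l.length,
      delta (l.get ⟨i, hi⟩) + i ≤ delta (l.get ⟨0, h0⟩) := by
  intro i
  induction i with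
  | zero => intro hi h0; simp
  | succ j ih =>
    intro hi h0
    have hj : j < l.length := Nat.lt_of_succ_lt hi
    have := h.2 j hi
    have := ih hj h0
    push_cast
    omega

/-- Every minimal `B`-sequence of `φ`-atoms has length at most
`5|φ| + 1`, where `|φ| = |clos(φ)|/2`. -/
theorem minBSeq_length_le (φ : Fml ℕ) (l : List (Atom φ)) (h : IsMinBSeq l) :
    l.length ≤ 5 * fsize φ + 1 := by
  rcases eq_or_ne l [] with rfl | hne
  · simp
  · have h0 : 0 < l.length := List.length_pos_iff.2 hne
    have hi : l.length - 1 < l.length := by omega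
    have hchain := delta_chain h (l.length - 1) hi h0
    have h1 := delta_nonneg (l.get ⟨l.length - 1, hi⟩)
    have h2 := delta_le (l.get ⟨0, h0⟩)
    omega

end
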